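/- Let p > 3 be a prime and let A be an 𝔽_p-brace of cardinality p^4 whose multiplicative group (A,∘) is isomorphic to the group XIV. Then A is right nilpotent. -/

import Mathlib

/-!
Write `c` for the generator `P`: it is central in `(A, ∘)`, every commutator is a power of it,
and it is itself a commutator (`R ∘ S = S ∘ R ∘ P`). These facts pass to `A ⧸ Soc(A)`, and `A`
is right nilpotent as soon as that quotient is, so by induction on the dimension it suffices
to show that `Soc(A) = ker λ` is nonzero.

Under `λ`, `(A, +)` is a module over the `p`-group `(A, ∘)`, so its upper series
`K₀ = 0 ⊂ K₁ ⊂ ⋯` reaches `A` after at most `dim A ≤ 4` steps. From `r ∘ s = s ∘ r ∘ c`,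
`λ_{s ∘ r} (λ_c - 1)` is the commutator of `λ_r - 1` and `λ_s - 1`, so `c ⋆ -` lowers the
series by two steps and `c ⋆ (c ⋆ x) = 0`. Now take a nonzero `λ`-fixed `w`. Expanding
`g ∘ w = w ∘ g ∘ cᵏ` additively gives
`w ⋆ g + k (c ⋆ (w ⋆ g) + c ⋆ g + c) + (k choose 2) (c ⋆ c) = 0`. If `c ⋆ c ≠ 0`, applying
this to `g` and to `c ⋆ g` forces `k ≡ 0`, so `w ⋆ g = 0`. If `c ⋆ c = 0`, then `k` depends
linearly on `g`, and polarising the quadratic term `k (c ⋆ g)` shows that `w` or `c` lies in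
the socle.
-/

/-- A left brace: `(A, +)` an abelian group, `(A, *)` a group (we write the brace
multiplication `∘` as `*`), with `a * (b + c) + a = a * b + a * c`. -/
class LeftBrace (A : Type*) extends Group A, AddCommGroup A where
  mul_add_eq : ∀ a b c : A, a * (b + c) + a = a * b + a * c

namespace LeftBrace

/-- The star operation `a * b = a∘b - a - b` of a left brace. -/
def star {A : Type*} [LeftBrace A] (a b : A) : A := a * b - a - b

end LeftBrace

/-- An `𝔽ₚ`-brace: a left brace whose additive group is a `ZMod p`-vector space
with `a * (α • b) = α • (a * b)`. -/
class FpBrace (p : ℕ) (A : Type*) extends LeftBrace A, Module (ZMod p) A where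
  star_smul' : ∀ (α : ZMod p) (a b : A),
    LeftBrace.star a (α • b) = α • LeftBrace.star a b

/-- The left chain `A^1 = A`, `A^{i+1} = A * A^i` (additive subgroup generated by
`a * b`, `a ∈ A`, `b ∈ A^i`). -/
def lpow (A : Type*) [LeftBrace A] : ℕ → AddSubgroup A
  | 0 => ⊤
  | 1 => ⊤
  | (n+2) => AddSubgroup.closure
      {x : A | ∃ a : A, ∃ b ∈ lpow A (n+1), x = LeftBrace.star a b}

/-- The right chain `A^{(1)} = A`, `A^{(i+1)} = A^{(i)} * A`. -/
def rpow (A : Type*) [LeftBrace A] : ℕ → AddSubgroup A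
  | 0 => ⊤
  | 1 => ⊤
  | (n+2) => AddSubgroup.closure
      {x : A | ∃ a ∈ rpow A (n+1), ∃ b : A, x = LeftBrace.star a b}

/-- A left brace is right nilpotent if `A^{(n)} = 0` for some `n`. -/
def IsRightNilpotent (A : Type*) [LeftBrace A] : Prop := ∃ n, rpow A n = ⊥

/-- The defining relations of the group XV on generators `P, Q, R, S`. -/
def XVRelations {A : Type*} [LeftBrace A] (p : ℕ) (P Q R S : A) : Prop :=
  Q * S = S * Q * P ∧ Q * R = R * Q ∧ P * S = S * P ∧ P * Q = Q * P ∧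
  P * R = R * P ∧ R * S = S * R * Q ∧
  P ^ p = 1 ∧ Q ^ p = 1 ∧ R ^ p = 1 ∧ S ^ p = 1

/-- The multiplicative group of the brace `A` is the group XV, with generators
`P, Q, R, S` satisfying the XV relations. -/
def IsXVBrace (p : ℕ) (A : Type*) [LeftBrace A] (P Q R S : A) : Prop :=
  Nat.card A = p ^ 4 ∧ Subgroup.closure {P, Q, R, S} = ⊤ ∧ XVRelations p P Q R S


/-- The Multiplicative Table with parameters `y, i, k`. -/
def MultTable {p : ℕ} {A : Type*} [LeftBrace A] [Module (ZMod p) A]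
    (P Q R S : A) (y i k : ZMod p) : Prop :=
  LeftBrace.star P P = 0 ∧ LeftBrace.star P Q = 0 ∧
  LeftBrace.star P R = y • S ∧ LeftBrace.star P S = 0 ∧
  LeftBrace.star Q P = 0 ∧ LeftBrace.star Q Q = -(y • S) ∧
  LeftBrace.star Q R = ((2 : ZMod p)⁻¹ * y) • S ∧ LeftBrace.star Q S = 0 ∧
  LeftBrace.star R P = y • S ∧ LeftBrace.star R Q = ((2 : ZMod p)⁻¹ * y) • S ∧
  LeftBrace.star R R = i • P + k • S ∧ LeftBrace.star R S = 0 ∧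
  LeftBrace.star S P = 0 ∧ LeftBrace.star S Q = -P ∧
  LeftBrace.star S R = -Q + P - ((2 : ZMod p)⁻¹ * y) • S ∧ LeftBrace.star S S = 0

/-- Additive subgroup generated by all `x * y`, `x ∈ X`, `y ∈ Y`. -/
def starSpan {A : Type*} [LeftBrace A] (X Y : AddSubgroup A) : AddSubgroup A :=
  AddSubgroup.closure {z : A | ∃ x ∈ X, ∃ y ∈ Y, z = LeftBrace.star x y}

/-- An ideal of a left brace: an additive subgroup closed under all `λ_a` and
normal in `(A, ∘)`. -/
def IsBraceIdeal {A : Type*} [LeftBrace A] (I : AddSubgroup A) : Prop :=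
  (∀ a : A, ∀ b ∈ I, a * b - a ∈ I) ∧ (∀ a : A, ∀ b ∈ I, a * b * a⁻¹ ∈ I)

/-- A brace is prime if the product of any two nonzero ideals is nonzero. -/
def IsPrimeBrace (A : Type*) [LeftBrace A] : Prop :=
  ∀ I J : AddSubgroup A, IsBraceIdeal I → IsBraceIdeal J → I ≠ ⊥ → J ≠ ⊥ →
    starSpan I J ≠ ⊥

/-- Left chain of a nonassociative algebra given by a bilinear map. -/
def preLieL (R : Type*) [CommRing R] (V : Type*) [AddCommGroup V] [Module R V]
    (mul : V →ₗ[R] V →ₗ[R] V) : ℕ → Submodule R V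
  | 0 => ⊤
  | 1 => ⊤
  | (n+2) => Submodule.span R
      {x : V | ∃ a : V, ∃ b ∈ preLieL R V mul (n+1), x = mul a b}

/-- Right chain of a nonassociative algebra given by a bilinear map. -/
def preLieR (R : Type*) [CommRing R] (V : Type*) [AddCommGroup V] [Module R V]
    (mul : V →ₗ[R] V →ₗ[R] V) : ℕ → Submodule R V
  | 0 => ⊤
  | 1 => ⊤
  | (n+2) => Submodule.span R
      {x : V | ∃ a ∈ preLieR R V mul (n+1), ∃ b : V, x = mul a b}

/-- The defining relations of the group XIV on generators `P, Q, R, S`. -/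
def XIVRelations {A : Type*} [LeftBrace A] (p : ℕ) (P Q R S : A) : Prop :=
  Q * P = P * Q ∧ Q * R = R * Q ∧ Q * S = S * Q ∧
  P * R = R * P ∧ P * S = S * P ∧ R * S = S * R * P ∧
  P ^ p = 1 ∧ Q ^ p = 1 ∧ R ^ p = 1 ∧ S ^ p = 1

theorem IsPGroup.exists_ne_zero_forall_smul_eq {p : ℕ} [Fact p.Prime] {G M : Type*} [Group G]
    (hG : IsPGroup p G) [AddCommGroup M] [Module (ZMod p) M] [Finite M] [Nontrivial M]
    [DistribMulAction G M] : ∃ m : M, m ≠ 0 ∧ ∀ g : G, g • m = m := by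
  obtain ⟨m, hm⟩ := exists_ne (0 : M)
  have hpm : p • m = 0 := by rw [← Nat.cast_smul_eq_nsmul (ZMod p), ZMod.natCast_self, zero_smul]
  have hpM : p ∣ Nat.card M := addOrderOf_eq_prime hpm hm ▸ addOrderOf_dvd_natCard m
  obtain ⟨b, hb, h0b⟩ :=
    hG.exists_fixed_point_of_prime_dvd_card_of_fixed_point M hpM (a := 0) fun g => smul_zero g
  exact ⟨b, h0b.symm, MulAction.mem_fixedPoints.mp hb⟩

section CommutatorGenerator

variable {G H : Type*} [Group G] [Group H]

/-- `c` is central and generates the derived subgroup, being itself a commutator. -/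
structure IsCentralCommutatorGenerator (c : G) : Prop where
  commute : ∀ g, Commute c g
  exists_mul_eq_mul_mul_pow : ∀ g h : G, ∃ k : ℕ, g * h = h * g * c ^ k
  exists_mul_eq_mul_mul : ∃ r s : G, r * s = s * r * c

theorem IsCentralCommutatorGenerator.map {c : G} (hc : IsCentralCommutatorGenerator c)
    (f : G →* H) (hf : Function.Surjective f) : IsCentralCommutatorGenerator (f c) where
  commute h := by
    obtain ⟨g, rfl⟩ := hf h
    exact (hc.commute g).map f
  exists_mul_eq_mul_mul_pow h h' := by
    obtain ⟨g, rfl⟩ := hf h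
    obtain ⟨g', rfl⟩ := hf h'
    obtain ⟨k, hk⟩ := hc.exists_mul_eq_mul_mul_pow g g'
    exact ⟨k, by simp only [← map_mul, ← map_pow, hk]⟩
  exists_mul_eq_mul_mul := by
    obtain ⟨r, s, h⟩ := hc.exists_mul_eq_mul_mul
    exact ⟨f r, f s, by simp only [← map_mul, h]⟩

theorem commute_of_closure_eq_top {c : G} {X : Set G} (hX : Subgroup.closure X = ⊤)
    (hc : ∀ x ∈ X, Commute c x) (g : G) : Commute c g := by
  have hle : Subgroup.closure X ≤ Subgroup.centralizer {c} := (Subgroup.closure_le _).mpr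
    fun x hx => Subgroup.mem_centralizer_singleton_iff.mpr (hc x hx).symm
  exact (Subgroup.mem_centralizer_singleton_iff.mp (hle (hX ▸ Subgroup.mem_top g))).symm

theorem exists_mul_eq_mul_mul_pow_of_closure_eq_top [Finite G] {c : G} {X : Set G}
    (hX : Subgroup.closure X = ⊤) (hc : ∀ g, Commute c g)
    (hXc : ∀ x ∈ X, ∀ y ∈ X, (y * x)⁻¹ * (x * y) ∈ Subgroup.zpowers c) (g h : G) :
    ∃ k : ℕ, g * h = h * g * c ^ k := by
  set N := Subgroup.zpowers c
  have : N.Normal := ⟨fun n hn g => by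
    obtain ⟨k, rfl⟩ := Subgroup.mem_zpowers_iff.mp hn
    rw [← ((hc g).zpow_left k).eq, mul_inv_cancel_right]
    exact hn⟩
  -- `G ⧸ ⟨c⟩` is generated by pairwise commuting elements, hence abelian.
  have hcomm : ∀ x ∈ QuotientGroup.mk' N '' X, ∀ y ∈ QuotientGroup.mk' N '' X,
      x * y = y * x := by
    rintro _ ⟨x, hx, rfl⟩ _ ⟨y, hy, rfl⟩
    rw [← map_mul, ← map_mul, eq_comm, QuotientGroup.mk'_apply, QuotientGroup.mk'_apply,
      QuotientGroup.eq]
    exact hXc x hx y hy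
  have hquot : Subgroup.closure (QuotientGroup.mk' N '' X) = ⊤ := by
    rw [← MonoidHom.map_closure, hX, ← MonoidHom.range_eq_map, QuotientGroup.range_mk']
  have hgh := (Subgroup.isMulCommutative_closure hcomm).is_comm.comm
    ⟨QuotientGroup.mk' N h, hquot ▸ Subgroup.mem_top _⟩
    ⟨QuotientGroup.mk' N g, hquot ▸ Subgroup.mem_top _⟩
  rw [Subtype.ext_iff, Subgroup.coe_mul, Subgroup.coe_mul, ← map_mul, ← map_mul,
    QuotientGroup.mk'_apply, QuotientGroup.mk'_apply, QuotientGroup.eq] at hgh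
  obtain ⟨k, hk⟩ := mem_powers_iff_mem_zpowers.mpr hgh
  exact ⟨k, by rw [show c ^ k = _ from hk, mul_inv_cancel_left]⟩

end CommutatorGenerator

theorem XIVRelations.isCentralCommutatorGenerator {A : Type*} [LeftBrace A] [Finite A] {p : ℕ}
    {P Q R S : A} (hgen : Subgroup.closure {P, Q, R, S} = ⊤) (h : XIVRelations p P Q R S) :
    IsCentralCommutatorGenerator P := by
  obtain ⟨hQP, hQR, hQS, hPR, hPS, hRS, -⟩ := h
  have hP : ∀ g, Commute P g := commute_of_closure_eq_top hgen <| by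
    simp only [Set.mem_insert_iff, Set.mem_singleton_iff]
    rintro x (rfl | rfl | rfl | rfl)
    exacts [Commute.refl _, hQP.symm, hPR, hPS]
  refine ⟨hP, exists_mul_eq_mul_mul_pow_of_closure_eq_top hgen hP ?_, R, S, hRS⟩
  simp only [Set.mem_insert_iff, Set.mem_singleton_iff]
  rintro x (rfl | rfl | rfl | rfl) y (rfl | rfl | rfl | rfl) <;>
    simp [hQP, hQR, hQS, hPR, hPS, hRS, mul_assoc, Subgroup.mem_zpowers]

namespace LeftBrace

variable {A B : Type*} [LeftBrace A] [LeftBrace B]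

local infixl:70 " ⋆ " => star

theorem one_eq_zero : (1 : A) = 0 := by
  simpa using mul_add_eq (1 : A) 0 0

def lam (a : A) : A →+ A :=
  AddMonoidHom.mk' (fun b => a * b - a) fun b c => by
    have h := mul_add_eq a b c
    rw [← sub_eq_iff_eq_add.mpr h.symm]
    abel

theorem lam_apply (a b : A) : lam a b = a * b - a := rfl

theorem mul_eq_add_lam (a b : A) : a * b = a + lam a b := by
  rw [lam_apply]; abel

theorem star_eq_lam_sub (a b : A) : a ⋆ b = lam a b - b := by
  rw [lam_apply, star]

theorem lam_eq_star_add (a b : A) : lam a b = a ⋆ b + b := by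
  rw [star_eq_lam_sub, sub_add_cancel]

theorem mul_eq_add_add_star (a b : A) : a * b = a + b + a ⋆ b := by
  rw [star]; abel

theorem lam_mul (a b x : A) : lam (a * b) x = lam a (lam b x) := by
  rw [lam_apply b, map_sub, lam_apply, lam_apply, lam_apply, mul_assoc]
  abel

theorem lam_one (x : A) : lam 1 x = x := by
  rw [lam_apply, one_mul, one_eq_zero, sub_zero]

theorem lam_inv_lam (a x : A) : lam a⁻¹ (lam a x) = x := by
  rw [← lam_mul, inv_mul_cancel, lam_one]

theorem lam_lam_inv (a x : A) : lam a (lam a⁻¹ x) = x := by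
  rw [← lam_mul, mul_inv_cancel, lam_one]

theorem star_add_right (a b c : A) : a ⋆ (b + c) = a ⋆ b + a ⋆ c := by
  simp only [star_eq_lam_sub, map_add]; abel

theorem star_zero_right (a : A) : a ⋆ 0 = 0 := by
  simp only [star_eq_lam_sub, map_zero, sub_zero]

theorem star_nsmul_right (a : A) (k : ℕ) (b : A) : a ⋆ (k • b) = k • (a ⋆ b) := by
  simp only [star_eq_lam_sub, map_nsmul, smul_sub]

theorem zero_star (b : A) : (0 : A) ⋆ b = 0 := by
  have h := lam_one b
  rw [one_eq_zero] at h
  rw [star_eq_lam_sub, h, sub_self]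

theorem star_comm_of_commute {a b : A} (h : Commute a b) : a ⋆ b = b ⋆ a := by
  rw [star, star, h.eq]; abel

theorem lam_lam_of_commute {a b : A} (h : Commute a b) (x : A) :
    lam a (lam b x) = lam b (lam a x) := by
  rw [← lam_mul, h.eq, lam_mul]

theorem star_star_of_commute {a b : A} (h : Commute a b) (x : A) :
    a ⋆ (b ⋆ x) = b ⋆ (a ⋆ x) := by
  simp only [star_eq_lam_sub, map_sub, lam_lam_of_commute h]; abel

theorem pow_eq_nsmul_add_choose_two_nsmul {c : A} (hc : c ⋆ (c ⋆ c) = 0) (k : ℕ) :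
    c ^ k = k • c + k.choose 2 • (c ⋆ c) := by
  induction k with
  | zero => simp [one_eq_zero]
  | succ k ih =>
    have hstar : c ⋆ c ^ k = k • (c ⋆ c) := by
      rw [ih, star_add_right, star_nsmul_right, star_nsmul_right, hc, smul_zero, add_zero]
    rw [pow_succ', mul_eq_add_add_star, hstar, ih, Nat.choose_succ_succ, Nat.choose_one_right,
      add_smul, add_smul, succ_nsmul]
    abel

theorem lam_eq_self_of_star_eq_zero {a : A} (ha : ∀ b, a ⋆ b = 0) (b : A) : lam a b = b := by
  rw [← sub_eq_zero, ← star_eq_lam_sub, ha]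

theorem mul_eq_add_of_star_eq_zero {a : A} (ha : ∀ b, a ⋆ b = 0) (b : A) : a * b = a + b := by
  rw [mul_eq_add_lam, lam_eq_self_of_star_eq_zero ha]

theorem inv_eq_neg_of_star_eq_zero {a : A} (ha : ∀ b, a ⋆ b = 0) : a⁻¹ = -a :=
  inv_eq_of_mul_eq_one_right <| by rw [mul_eq_add_of_star_eq_zero ha, add_neg_cancel, one_eq_zero]

def socle (A : Type*) [LeftBrace A] : AddSubgroup A where
  carrier := {a | ∀ b, a ⋆ b = 0}
  zero_mem' := zero_star
  add_mem' {a a'} ha ha' b := by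
    rw [← mul_eq_add_of_star_eq_zero ha, star_eq_lam_sub, lam_mul,
      lam_eq_self_of_star_eq_zero ha', lam_eq_self_of_star_eq_zero ha, sub_self]
  neg_mem' {a} ha b := by
    rw [← inv_eq_neg_of_star_eq_zero ha, star_eq_lam_sub, ← lam_eq_self_of_star_eq_zero ha b,
      lam_inv_lam, lam_eq_self_of_star_eq_zero ha, sub_self]

theorem lam_eq_conj_of_mem_socle {t : A} (ht : t ∈ socle A) (g : A) :
    lam g t = g * t * g⁻¹ := by
  have hg : g + lam g g⁻¹ = 0 := by rw [← mul_eq_add_lam, mul_inv_cancel, one_eq_zero]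
  rw [mul_assoc, mul_eq_add_of_star_eq_zero ht, mul_eq_add_lam, map_add, ← add_assoc,
    add_right_comm, hg, zero_add]

theorem isBraceIdeal_socle : IsBraceIdeal (socle A) := by
  have hconj : ∀ (g : A), ∀ t ∈ socle A, g * t * g⁻¹ ∈ socle A := fun g t ht b => by
    rw [star_eq_lam_sub, lam_mul, lam_mul, lam_eq_self_of_star_eq_zero ht, lam_lam_inv, sub_self]
  refine ⟨fun g t ht => ?_, hconj⟩
  rw [← lam_apply, lam_eq_conj_of_mem_socle ht]
  exact hconj g t ht

theorem inv_mul_eq_lam_inv_sub (a b : A) : b⁻¹ * a = lam b⁻¹ (a - b) := by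
  rw [map_sub, lam_apply, lam_apply, inv_mul_cancel, one_eq_zero]
  abel

theorem rpow_succ_le : ∀ n, rpow A (n + 1) ≤ rpow A n
  | 0 => le_rfl
  | 1 => le_top
  | n + 2 => AddSubgroup.closure_mono fun _ ⟨a, ha, b, hx⟩ => ⟨a, rpow_succ_le (n + 1) ha, b, hx⟩

theorem map_rpow_le (f : A →+ B) (hf : ∀ a b, f (a ⋆ b) = f a ⋆ f b) :
    ∀ n, (rpow A n).map f ≤ rpow B n
  | 0 => le_top
  | 1 => le_top
  | n + 2 => by
    rw [AddSubgroup.map_le_iff_le_comap]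
    refine AddSubgroup.closure_le _ |>.mpr ?_
    rintro _ ⟨a, ha, b, rfl⟩
    exact AddSubgroup.subset_closure
      ⟨f a, map_rpow_le f hf (n + 1) (AddSubgroup.mem_map_of_mem f ha), f b, hf a b⟩

theorem lam_mul_star_eq_of_mul_eq {r s c : A} (h : r * s = s * r * c) (x : A) :
    lam (s * r) (c ⋆ x) = r ⋆ (s ⋆ x) - s ⋆ (r ⋆ x) := by
  rw [star_eq_lam_sub c, map_sub, ← lam_mul, ← h, lam_mul, lam_mul]
  simp only [lam_eq_star_add, star_add_right]
  abel

/-- The relation `g ∘ w = w ∘ g ∘ cᵏ`, expanded additively for a `λ`-fixed `w`. -/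
theorem star_add_nsmul_eq_zero_of_mul_eq {c w g : A} {k : ℕ} (hcen : ∀ g, Commute c g)
    (hcc : ∀ x, c ⋆ (c ⋆ x) = 0) (hw : ∀ g, g ⋆ w = 0) (hk : g * w = w * g * c ^ k) :
    w ⋆ g + k • (c ⋆ (w ⋆ g) + c ⋆ g + c) + k.choose 2 • (c ⋆ c) = 0 := by
  have hfix (a : A) : lam a (c ⋆ c) = c ⋆ c := by
    rw [lam_eq_star_add, star_star_of_commute (hcen a).symm, ← star_comm_of_commute (hcen a),
      hcc, zero_add]
  have hlam : lam (w * g) (c ^ k) = k • (c ⋆ (w ⋆ g) + c ⋆ g + c) + k.choose 2 • (c ⋆ c) := by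
    rw [pow_eq_nsmul_add_choose_two_nsmul (hcc c), lam_mul, map_add, map_nsmul, map_nsmul,
      hfix, map_add, map_nsmul, map_nsmul, hfix, lam_eq_star_add g c,
      ← star_comm_of_commute (hcen g), map_add, lam_eq_star_add w (c ⋆ g), lam_eq_star_add w c,
      star_star_of_commute (hcen w).symm, ← star_comm_of_commute (hcen w), hw, zero_add]
  rw [mul_eq_add_add_star g w, hw, mul_eq_add_lam (w * g), hlam, mul_eq_add_add_star w g] at hk
  calc _ = w + g + w ⋆ g + (k • (c ⋆ (w ⋆ g) + c ⋆ g + c) + k.choose 2 • (c ⋆ c))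
        - (g + w + 0) := by abel
    _ = 0 := by rw [← hk, sub_self]

end LeftBrace

namespace IsBraceIdeal

open LeftBrace

variable {A : Type*} [LeftBrace A] {I : AddSubgroup A} (hI : IsBraceIdeal I)
include hI

theorem lam_mem (a : A) {b : A} (hb : b ∈ I) : lam a b ∈ I := hI.1 a b hb

theorem inv_mul_mem_iff {a b : A} : b⁻¹ * a ∈ I ↔ a - b ∈ I := by
  refine ⟨fun h => ?_, fun h => ?_⟩
  · rw [← lam_lam_inv b (a - b), ← inv_mul_eq_lam_inv_sub]
    exact hI.lam_mem b h
  · rw [inv_mul_eq_lam_inv_sub]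
    exact hI.lam_mem _ h

theorem mul_mem {x y : A} (hx : x ∈ I) (hy : y ∈ I) : x * y ∈ I := by
  rw [mul_eq_add_lam]
  exact add_mem hx (hI.lam_mem x hy)

theorem inv_mem {x : A} (hx : x ∈ I) : x⁻¹ ∈ I := by
  have h : x⁻¹ + lam x⁻¹ x = 0 := by rw [← mul_eq_add_lam, inv_mul_cancel, one_eq_zero]
  rw [eq_neg_of_add_eq_zero_left h]
  exact neg_mem (hI.lam_mem _ hx)

theorem mul_sub_mul_mem {a a' b b' : A} (ha : a - a' ∈ I) (hb : b - b' ∈ I) :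
    a * b - a' * b' ∈ I := by
  rw [← hI.inv_mul_mem_iff] at ha hb ⊢
  have h : (a' * b')⁻¹ * (a * b) = b'⁻¹ * (a'⁻¹ * a) * b'⁻¹⁻¹ * (b'⁻¹ * b) := by group
  rw [h]
  exact hI.mul_mem (hI.2 _ _ ha) hb

theorem inv_sub_inv_mem {a a' : A} (ha : a - a' ∈ I) : a⁻¹ - a'⁻¹ ∈ I := by
  rw [← hI.inv_mul_mem_iff] at ha ⊢
  have h : a'⁻¹⁻¹ * a⁻¹ = a' * (a'⁻¹ * a)⁻¹ * a'⁻¹ := by group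
  rw [h]
  exact hI.2 _ _ (hI.inv_mem ha)

end IsBraceIdeal

namespace FpBrace

open LeftBrace

variable {p : ℕ} {A : Type*} [FpBrace p A] {c w : A}

local infixl:70 " ⋆ " => star

variable (p) in
def starLinear (a : A) : A →ₗ[ZMod p] A where
  toFun := star a
  map_add' := star_add_right a
  map_smul' r x := star_smul' r a x

theorem starLinear_apply (a x : A) : starLinear p a x = a ⋆ x := rfl

variable (p A) in
def socle : Submodule (ZMod p) A := AddSubgroup.toZModSubmodule p (LeftBrace.socle A)

theorem mem_socle {a : A} : a ∈ socle p A ↔ ∀ b, a ⋆ b = 0 := Iff.rfl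

abbrev quotient (I : Submodule (ZMod p) A) (hI : IsBraceIdeal I.toAddSubgroup) :
    FpBrace p (A ⧸ I) :=
  { Submodule.Quotient.addCommGroup I, Submodule.Quotient.module I with
    mul := Quotient.map₂ (· * ·) fun _ _ ha _ _ hb => (Submodule.quotientRel_def I).mpr <|
      hI.mul_sub_mul_mem ((Submodule.quotientRel_def I).mp ha) ((Submodule.quotientRel_def I).mp hb)
    one := Submodule.Quotient.mk 1
    inv := Quotient.map (·⁻¹) fun _ _ ha => (Submodule.quotientRel_def I).mpr <|
      hI.inv_sub_inv_mem ((Submodule.quotientRel_def I).mp ha)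
    mul_assoc := by
      rintro ⟨a⟩ ⟨b⟩ ⟨c⟩
      exact congrArg (Submodule.Quotient.mk (p := I)) (mul_assoc a b c)
    one_mul := by
      rintro ⟨a⟩
      exact congrArg (Submodule.Quotient.mk (p := I)) (one_mul a)
    mul_one := by
      rintro ⟨a⟩
      exact congrArg (Submodule.Quotient.mk (p := I)) (mul_one a)
    inv_mul_cancel := by
      rintro ⟨a⟩
      exact congrArg (Submodule.Quotient.mk (p := I)) (inv_mul_cancel a)
    mul_add_eq := by
      rintro ⟨a⟩ ⟨b⟩ ⟨c⟩
      exact congrArg (Submodule.Quotient.mk (p := I)) (mul_add_eq a b c)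
    star_smul' := by
      rintro r ⟨a⟩ ⟨b⟩
      exact congrArg (Submodule.Quotient.mk (p := I)) (star_smul' r a b) }

instance : FpBrace p (A ⧸ socle p A) := quotient (socle p A) isBraceIdeal_socle

variable (p A) in
def socleMkQ : A →* A ⧸ socle p A where
  toFun := Submodule.Quotient.mk
  map_one' := rfl
  map_mul' _ _ := rfl

theorem socleMkQ_surjective : Function.Surjective (socleMkQ p A) :=
  Submodule.Quotient.mk_surjective _

theorem mkQ_star (a b : A) : (socle p A).mkQ (a ⋆ b) = (socle p A).mkQ a ⋆ (socle p A).mkQ b :=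
  rfl

theorem isRightNilpotent_of_quotient_socle (h : IsRightNilpotent (A ⧸ socle p A)) :
    IsRightNilpotent A := by
  obtain ⟨n, hn⟩ := h
  have hn' : rpow (A ⧸ socle p A) (n + 1) = ⊥ := le_bot_iff.mp (hn ▸ rpow_succ_le n)
  have hsoc : ∀ a ∈ rpow A (n + 1), a ∈ socle p A := fun a ha => by
    have := map_rpow_le (socle p A).mkQ.toAddMonoidHom mkQ_star (n + 1)
      (AddSubgroup.mem_map_of_mem _ ha)
    rw [hn', AddSubgroup.mem_bot] at this
    exact (Submodule.Quotient.mk_eq_zero _).mp this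
  refine ⟨n + 2, eq_bot_iff.mpr <| AddSubgroup.closure_le _ |>.mpr ?_⟩
  rintro _ ⟨a, ha, b, rfl⟩
  exact (mem_socle.mp (hsoc a ha) b).symm ▸ zero_mem _

variable (p A) in
/-- The upper series of `(A, +)` as a module over `(A, ∘)` acting by `λ`;
its first term is the space of `λ`-fixed vectors. -/
def fixSeries : ℕ → Submodule (ZMod p) A
  | 0 => ⊥
  | j + 1 => ⨅ g, (fixSeries j).comap (starLinear p g)

theorem fixSeries_zero : fixSeries p A 0 = ⊥ := rfl

theorem mem_fixSeries_succ {x : A} {j : ℕ} :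
    x ∈ fixSeries p A (j + 1) ↔ ∀ g, g ⋆ x ∈ fixSeries p A j := by
  simp only [fixSeries, Submodule.mem_iInf, Submodule.mem_comap, starLinear_apply]

theorem mem_fixSeries_one {x : A} : x ∈ fixSeries p A 1 ↔ ∀ g, g ⋆ x = 0 := by
  simp only [mem_fixSeries_succ, fixSeries_zero, Submodule.mem_bot]

theorem mem_socle_of_commute_of_mem_fixSeries_one {a : A} (hcomm : ∀ g, Commute a g)
    (ha : a ∈ fixSeries p A 1) : a ∈ socle p A :=
  mem_socle.mpr fun g => by rw [star_comm_of_commute (hcomm g), mem_fixSeries_one.mp ha]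

theorem fixSeries_le_succ : ∀ j, fixSeries p A j ≤ fixSeries p A (j + 1)
  | 0 => bot_le
  | j + 1 => fun _ hx => mem_fixSeries_succ.mpr fun g =>
    fixSeries_le_succ j (mem_fixSeries_succ.mp hx g)

theorem fixSeries_mono : Monotone (fixSeries p A) :=
  monotone_nat_of_le_succ fixSeries_le_succ

theorem lam_mem_fixSeries {x : A} {j : ℕ} (hx : x ∈ fixSeries p A j) (g : A) :
    lam g x ∈ fixSeries p A j := by
  rw [← sub_add_cancel (lam g x) x, ← star_eq_lam_sub]
  cases j with
  | zero => rw [fixSeries_zero, Submodule.mem_bot] at hx ⊢; rw [hx, star_zero_right, add_zero]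
  | succ j => exact add_mem (fixSeries_le_succ j (mem_fixSeries_succ.mp hx g)) hx

variable (p) in
def lamRep : Representation (ZMod p) A A where
  toFun a := starLinear p a + LinearMap.id
  map_one' := by ext x; simp [starLinear_apply, star_eq_lam_sub, lam_one]
  map_mul' a b := by ext x; simp [starLinear_apply, star_eq_lam_sub, lam_mul]

theorem lamRep_apply (a x : A) : lamRep p a x = lam a x := by
  simp [lamRep, starLinear_apply, star_eq_lam_sub]

theorem isPGroup [Fact p.Prime] [Finite A] : IsPGroup p A :=
  IsPGroup.of_card <| by rw [Module.natCard_eq_pow_finrank (K := ZMod p), Nat.card_zmod]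

theorem exists_mem_fixSeries_succ_notMem [Fact p.Prime] [Finite A] {j : ℕ}
    (hj : fixSeries p A j ≠ ⊤) : ∃ x ∈ fixSeries p A (j + 1), x ∉ fixSeries p A j := by
  set K := fixSeries p A j
  have hK (g : A) : K ≤ K.comap (lamRep p g) := fun x hx => by
    rw [Submodule.mem_comap, lamRep_apply]
    exact lam_mem_fixSeries hx g
  let _ := DistribMulAction.compHom (A ⧸ K) ((lamRep p).quotient K hK)
  have : Finite (A ⧸ K) := Finite.of_surjective _ K.mkQ_surjective
  have : Nontrivial (A ⧸ K) := Submodule.Quotient.nontrivial_iff.mpr hj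
  obtain ⟨m, hm0, hm⟩ := (isPGroup (p := p) (A := A)).exists_ne_zero_forall_smul_eq (M := A ⧸ K)
  obtain ⟨x, rfl⟩ := Submodule.mkQ_surjective K m
  refine ⟨x, mem_fixSeries_succ.mpr fun g => ?_,
    fun hx => hm0 ((Submodule.Quotient.mk_eq_zero K).mpr hx)⟩
  have hg : Submodule.Quotient.mk (lam g x) = (Submodule.Quotient.mk x : A ⧸ K) := by
    rw [← lamRep_apply]
    exact hm g
  rw [star_eq_lam_sub]
  exact (Submodule.Quotient.eq K).mp hg

theorem fixSeries_finrank_eq_top [Fact p.Prime] [Finite A] :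
    fixSeries p A (Module.finrank (ZMod p) A) = ⊤ := by
  by_contra htop
  have hlt (j : ℕ) (hj : j < Module.finrank (ZMod p) A) :
      fixSeries p A j < fixSeries p A (j + 1) := by
    obtain ⟨x, hx, hxj⟩ := exists_mem_fixSeries_succ_notMem fun h =>
      htop (top_le_iff.mp (h ▸ fixSeries_mono hj.le))
    exact lt_of_le_of_ne (fixSeries_le_succ j) fun h => hxj (h ▸ hx)
  have hrank (j : ℕ) (hj : j ≤ Module.finrank (ZMod p) A) :
      j ≤ Module.finrank (ZMod p) (fixSeries p A j) := by
    induction j with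
    | zero => exact Nat.zero_le _
    | succ j ih => exact (ih (by omega)).trans_lt (Submodule.finrank_lt_finrank_of_lt (hlt j hj))
  exact htop (Submodule.eq_top_of_finrank_eq ((Submodule.finrank_le _).antisymm (hrank _ le_rfl)))

theorem fixSeries_eq_top_of_finrank_le [Fact p.Prime] [Finite A] {n : ℕ}
    (hn : Module.finrank (ZMod p) A ≤ n) : fixSeries p A n = ⊤ :=
  top_le_iff.mp ((fixSeries_finrank_eq_top (p := p) (A := A)) ▸ fixSeries_mono hn)

theorem star_mem_fixSeries_of_mul_eq {r s : A} (h : r * s = s * r * c) {x : A} {j : ℕ}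
    (hx : x ∈ fixSeries p A (j + 2)) : c ⋆ x ∈ fixSeries p A j := by
  rw [← lam_inv_lam (s * r) (c ⋆ x), lam_mul_star_eq_of_mul_eq h]
  refine lam_mem_fixSeries (sub_mem ?_ ?_) _ <;> refine mem_fixSeries_succ.mp ?_ _ <;>
    exact mem_fixSeries_succ.mp hx _

theorem star_star_eq_zero_of_mul_eq [Fact p.Prime] [Finite A]
    (hA : Module.finrank (ZMod p) A ≤ 4) {r s : A} (h : r * s = s * r * c) (x : A) :
    c ⋆ (c ⋆ x) = 0 := by
  have hx : x ∈ fixSeries p A 4 := fixSeries_eq_top_of_finrank_le hA ▸ Submodule.mem_top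
  simpa [fixSeries_zero] using
    star_mem_fixSeries_of_mul_eq h (star_mem_fixSeries_of_mul_eq h hx)

theorem notMem_range_starLinear_self [Fact p.Prime] [Finite A]
    (hA : Module.finrank (ZMod p) A ≤ 4) (hcen : ∀ g, Commute c g) {r s : A}
    (h : r * s = s * r * c) (hcs : c ∉ socle p A) : c ∉ LinearMap.range (starLinear p c) := by
  rintro ⟨y, hy⟩
  rw [starLinear_apply] at hy
  -- `c = c ⋆ y` lies in `K₂`, hence `c = y ⋆ c` lies in `K₁`
  have hcK1 : c ∈ fixSeries p A 1 := by
    have hy4 : y ∈ fixSeries p A 4 := fixSeries_eq_top_of_finrank_le hA ▸ Submodule.mem_top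
    have hcK2 : c ∈ fixSeries p A 2 := hy ▸ star_mem_fixSeries_of_mul_eq h hy4
    rw [← hy, star_comm_of_commute (hcen y)]
    exact mem_fixSeries_succ.mp hcK2 y
  exact hcs (mem_socle_of_commute_of_mem_fixSeries_one hcen hcK1)

variable [Fact p.Prime] [NeZero (2 : ZMod p)]

theorem exists_smul_eq_zero_of_mul_eq (hcen : ∀ g, Commute c g) (hcc : ∀ x, c ⋆ (c ⋆ x) = 0)
    (hw : ∀ g, g ⋆ w = 0) {g : A} (hk : ∃ k : ℕ, g * w = w * g * c ^ k) :
    ∃ κ : ZMod p,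
      w ⋆ g + κ • (c ⋆ (w ⋆ g) + c ⋆ g + c) + (κ * (κ - 1) / 2) • (c ⋆ c) = 0 := by
  obtain ⟨k, hk⟩ := hk
  refine ⟨k, ?_⟩
  rw [← Nat.cast_choose_two, Nat.cast_smul_eq_nsmul, Nat.cast_smul_eq_nsmul]
  exact star_add_nsmul_eq_zero_of_mul_eq hcen hcc hw hk

theorem mem_socle_of_star_self_ne_zero (hcen : ∀ g, Commute c g)
    (hpow : ∀ g, ∃ k : ℕ, g * w = w * g * c ^ k) (hcc : ∀ x, c ⋆ (c ⋆ x) = 0)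
    (hc : c ⋆ c ≠ 0) (hw : ∀ g, g ⋆ w = 0) : w ∈ socle p A := by
  refine mem_socle.mpr fun g => ?_
  obtain ⟨κ, hκ⟩ := exists_smul_eq_zero_of_mul_eq hcen hcc hw (hpow g)
  obtain ⟨κ', hκ'⟩ := exists_smul_eq_zero_of_mul_eq hcen hcc hw (hpow (c ⋆ g))
  rw [star_star_of_commute (hcen w).symm, hcc, hcc] at hκ'
  have h1 := congrArg (starLinear p c) hκ
  simp only [map_add, map_smul, map_zero, starLinear_apply, hcc, zero_add, smul_zero,
    add_zero] at h1
  have h3 : κ' • c = (κ - κ' * (κ' - 1) / 2) • (c ⋆ c) := by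
    linear_combination (norm := module) hκ' - h1
  -- `κ' ≠ 0` would put `c` in the span of `c ⋆ c`, and then `c ⋆ c ∈ c ⋆ span (c ⋆ c) = 0`.
  obtain rfl : κ' = 0 := by
    by_contra hne
    have := congrArg (starLinear p c) h3
    simp only [map_smul, starLinear_apply, hcc, smul_zero, smul_eq_zero] at this
    exact this.elim hne hc
  obtain rfl : κ = 0 := (smul_eq_zero.mp (by simpa using h3.symm)).resolve_right hc
  simpa using hκ

theorem exists_linearMap_star_add_smul_eq_zero (hcen : ∀ g, Commute c g)
    (hpow : ∀ g, ∃ k : ℕ, g * w = w * g * c ^ k) (hcc : ∀ x, c ⋆ (c ⋆ x) = 0)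
    (hc : c ⋆ c = 0) (hrange : c ∉ LinearMap.range (starLinear p c)) (hw : ∀ g, g ⋆ w = 0) :
    ∃ μ : A →ₗ[ZMod p] ZMod p, ∀ g, w ⋆ g + μ g • (c ⋆ g + c) = 0 := by
  obtain ⟨ξ, hξc, hξ⟩ := Submodule.exists_le_ker_of_notMem hrange
  have hξ' (g : A) : ξ (c ⋆ g) = 0 := hξ ⟨g, rfl⟩
  -- the exponent of `c` in `g ∘ w = w ∘ g ∘ cᵏ` is read off linearly from `w ⋆ g`
  refine ⟨-(ξ c)⁻¹ • (ξ ∘ₗ starLinear p w), fun g => ?_⟩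
  obtain ⟨κ, hκ⟩ := exists_smul_eq_zero_of_mul_eq hcen hcc hw (hpow g)
  rw [hc, smul_zero, add_zero] at hκ
  have hcwg : c ⋆ (w ⋆ g) = 0 := by
    simpa only [map_add, map_smul, map_zero, starLinear_apply, hcc, hc, smul_zero, add_zero]
      using congrArg (starLinear p c) hκ
  rw [hcwg, zero_add] at hκ
  have hκξ : κ = -(ξ c)⁻¹ * ξ (w ⋆ g) := by
    have := congrArg ξ hκ
    simp only [map_add, map_smul, hξ', map_zero, zero_add, smul_eq_mul] at this
    field_simp
    linear_combination this
  simpa only [LinearMap.smul_apply, LinearMap.comp_apply, starLinear_apply, smul_eq_mul,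
    ← hκξ] using hκ

theorem mem_socle_or_mem_socle_of_star_add_smul_eq_zero {μ : A →ₗ[ZMod p] ZMod p}
    (hμ : ∀ g, w ⋆ g + μ g • (c ⋆ g + c) = 0) : w ∈ socle p A ∨ c ∈ socle p A := by
  have hpolar (g g' : A) : μ g • (c ⋆ g') + μ g' • (c ⋆ g) = 0 := by
    have := hμ (g + g')
    rw [star_add_right, star_add_right, map_add] at this
    linear_combination (norm := module) this - hμ g - hμ g'
  by_cases hμ0 : μ = 0
  · exact .inl <| mem_socle.mpr fun g => by simpa [hμ0] using hμ g
  obtain ⟨h, hh⟩ : ∃ h, μ h ≠ 0 := by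
    by_contra! H
    exact hμ0 (LinearMap.ext H)
  have hch : c ⋆ h = 0 := by
    have := hpolar h h
    rw [← add_smul, ← two_mul, smul_eq_zero] at this
    exact this.resolve_left (mul_ne_zero two_ne_zero hh)
  exact .inr <| mem_socle.mpr fun g => by simpa [hch, hh] using hpolar g h

theorem socle_ne_bot [Finite A] [Nontrivial A] (hA : Module.finrank (ZMod p) A ≤ 4)
    (hc : IsCentralCommutatorGenerator c) : socle p A ≠ ⊥ := by
  obtain ⟨r, s, hrs⟩ := hc.exists_mul_eq_mul_mul
  have hcc := star_star_eq_zero_of_mul_eq hA hrs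
  obtain ⟨w, hw, hw0⟩ := exists_mem_fixSeries_succ_notMem (p := p) (A := A) (j := 0) <| by
    rw [fixSeries_zero]
    exact bot_ne_top
  rw [fixSeries_zero, Submodule.mem_bot] at hw0
  have hpow (g : A) := hc.exists_mul_eq_mul_mul_pow g w
  rw [Submodule.ne_bot_iff]
  by_cases hcs : c ∈ socle p A
  · by_cases hc0 : c = 0
    · refine ⟨w, mem_socle_of_commute_of_mem_fixSeries_one (fun g => ?_) hw, hw0⟩
      obtain ⟨k, hk⟩ := hpow g
      rw [hc0, ← one_eq_zero, one_pow, mul_one] at hk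
      exact hk.symm
    · exact ⟨c, hcs, hc0⟩
  refine ⟨w, ?_, hw0⟩
  by_cases hc2 : c ⋆ c = 0
  · obtain ⟨μ, hμ⟩ := exists_linearMap_star_add_smul_eq_zero hc.commute hpow hcc hc2
      (notMem_range_starLinear_self hA hc.commute hrs hcs) (mem_fixSeries_one.mp hw)
    exact (mem_socle_or_mem_socle_of_star_add_smul_eq_zero hμ).resolve_right hcs
  · exact mem_socle_of_star_self_ne_zero hc.commute hpow hcc hc2 (mem_fixSeries_one.mp hw)

theorem isRightNilpotent_of_finrank_le_four [Finite A]
    (hA : Module.finrank (ZMod p) A ≤ 4) (hc : IsCentralCommutatorGenerator c) :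
    IsRightNilpotent A := by
  induction hn : Module.finrank (ZMod p) A using Nat.strong_induction_on generalizing A c with
  | _ n ih =>
  obtain hA1 | hA1 := subsingleton_or_nontrivial A
  · exact ⟨0, Subsingleton.elim _ _⟩
  have : Finite (A ⧸ socle p A) := Finite.of_surjective _ (socle p A).mkQ_surjective
  have hlt : Module.finrank (ZMod p) (A ⧸ socle p A) < n := by
    have := (socle p A).finrank_quotient_add_finrank
    have := Submodule.finrank_eq_zero.not.mpr (socle_ne_bot hA hc)
    omega
  exact isRightNilpotent_of_quotient_socle <|
    ih _ (hn ▸ hlt) (by omega) (hc.map (socleMkQ p A) socleMkQ_surjective) rfl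

end FpBrace

/-- an `𝔽ₚ`-brace of cardinality `p⁴` whose multiplicative group is the
group XIV is right nilpotent. -/
theorem statement19 (p : ℕ) (hp : p.Prime) (hp3 : 3 < p) (A : Type*) [FpBrace p A]
    (hcard : Nat.card A = p ^ 4)
    (hXIV : ∃ P Q R S : A,
      Subgroup.closure {P, Q, R, S} = ⊤ ∧ XIVRelations p P Q R S) :
    IsRightNilpotent A := by
  have : Fact p.Prime := ⟨hp⟩
  have : NeZero (2 : ZMod p) := ⟨Ring.two_ne_zero (by rw [ZMod.ringChar_zmod_n]; omega)⟩
  have : Finite A := Nat.finite_of_card_ne_zero (by rw [hcard]; exact pow_ne_zero 4 hp.ne_zero)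
  have hA : Module.finrank (ZMod p) A = 4 := by
    rw [Module.natCard_eq_pow_finrank (K := ZMod p), Nat.card_zmod] at hcard
    exact Nat.pow_right_injective hp.two_le hcard
  obtain ⟨P, Q, R, S, hgen, hrel⟩ := hXIV
  exact FpBrace.isRightNilpotent_of_finrank_le_four hA.le (hrel.isCentralCommutatorGenerator hgen)
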